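/- Let P and Q be nonempty compact convex sets in a real inner product space with diameters D_P and D_Q, let D = √(D_P² + D_Q²), and set c = (D_P + D_Q + dist(P, Q)) · max{D_P, D_Q} + 2D². Consider the Alternating Linear Minimizations iterates with short steps: x₀ ∈ P, y₀ ∈ Q, and for t ≥ 0, u_t ∈ P minimizes ⟨x_t − y_t, x⟩ over P, γ_{t,1} = min{⟨x_t − y_t, x_t − u_t⟩/‖x_t − u_t‖², 1}, x_{t+1} = x_t + γ_{t,1}(u_t − x_t); v_t ∈ Q minimizes ⟨y_t − x_{t+1}, y⟩ over Q, γ_{t,2} = min{⟨y_t − x_{t+1}, y_t − v_t⟩/‖y_t − v_t‖², 1}, y_{t+1} = y_t + γ_{t,2}(v_t − y_t). Then for every T ≥ 1: min_{1 ≤ t ≤ T} max_{x ∈ P, y ∈ Q} ( ‖x_t − y_t‖² − ⟨x_t − y_t, x − y⟩ ) ≤ 16c/(T + 4). -/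

import Mathlib

/-!
For `f(x, y) = ½‖x - y‖²` the quantity `‖x - y‖² - ⟪x - y, p - q⟫` is the Frank–Wolfe (duality)
gap at `(x, y)`, and by convexity it dominates the primal gap `h_t = ‖x_t - y_t‖² - dist(P, Q)²`
up to a factor 2. One round of ALM makes two short steps; each decreases `‖x - y‖²` by an amount
that controls the square of its own Frank–Wolfe gap, and the remaining error from evaluating the
`y`-step at the new `x` is bounded by the length of the `x`-step. Together this gives
`s_t² ≤ 4c (h_t - h_{t+1})` for an upper bound `s_t` of the duality gap, hence
`h_t ≤ 16c / (t + 4)`; summing the decrease over the second half of `1, …, T` then forces some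
`s_t` below `16c / (T + 4)`.
-/

open RealInnerProductSpace Metric

theorem add_sq_le_add_mul_add_of_sq_le_mul {a b p q X Y : ℝ} (hp : 0 ≤ p) (hq : 0 ≤ q)
    (hX : 0 ≤ X) (hY : 0 ≤ Y) (ha : a ^ 2 ≤ p * X) (hb : b ^ 2 ≤ q * Y) :
    (a + b) ^ 2 ≤ (p + q) * (X + Y) := by
  have hab : (2 * a * b) ^ 2 ≤ (p * Y + q * X) ^ 2 := by
    nlinarith [sq_nonneg (p * Y - q * X), mul_le_mul ha hb (sq_nonneg b) (mul_nonneg hp hX)]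
  have := (abs_le_of_sq_le_sq' hab (by positivity)).2
  nlinarith

theorem le_div_add_four_of_sq_le_mul_sub {h : ℕ → ℝ} {K : ℝ} (h_nonneg : ∀ t, 0 ≤ h t)
    (h_zero : h 0 ≤ K / 4) (h_dec : ∀ t, h t ^ 2 ≤ K * (h t - h (t + 1))) (t : ℕ) :
    h t ≤ K / (t + 4) := by
  rcases (show 0 ≤ K by linarith [h_nonneg 0]).eq_or_lt with rfl | hK
  · rw [zero_div]
    nlinarith [h_dec t]
  induction t with
  | zero => simpa using h_zero
  | succ n ih =>
    set H := h n
    have hH : H * (n + 4) ≤ K := (le_div_iff₀ (by positivity)).1 ih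
    -- `K² - (K H - H²)(n + 5) = H² + e H (n + 3) + e²` with `e = K - H (n + 4) ≥ 0`.
    have key : (K * H - H ^ 2) * (n + 5) ≤ K * K := by
      nlinarith [mul_nonneg (mul_nonneg (sub_nonneg.2 hH) (h_nonneg n))
        (by positivity : (0 : ℝ) ≤ n + 3)]
    rw [le_div_iff₀ (by positivity)]
    push_cast
    nlinarith [h_dec n]

open Finset in
theorem exists_le_div_of_sq_le_mul_sub {h s : ℕ → ℝ} {c : ℝ} (h_nonneg : ∀ t, 0 ≤ h t)
    (h_le : ∀ t : ℕ, h t ≤ 16 * c / (t + 4)) (hs : ∀ t, s t ^ 2 ≤ 4 * c * (h t - h (t + 1)))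
    (hs_le : ∀ t, s t ≤ 3 * c) {T : ℕ} (hT : 1 ≤ T) :
    ∃ t, 1 ≤ t ∧ t ≤ T ∧ s t ≤ 16 * c / (T + 4) := by
  have hc : 0 ≤ c := by
    have := (h_nonneg 0).trans (h_le 0)
    norm_num at this
    linarith
  rcases hc.eq_or_lt with rfl | hc
  · refine ⟨1, le_rfl, hT, ?_⟩
    simp only [mul_zero, zero_mul, zero_div] at hs ⊢
    nlinarith [hs 1]
  rcases hT.eq_or_lt with rfl | hT
  · refine ⟨1, le_rfl, le_rfl, ?_⟩
    rw [le_div_iff₀ (by positivity)]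
    norm_num
    linarith [hs_le 1]
  -- Otherwise every `s t` with `T / 2 ≤ t ≤ T` is too large, and their squares exceed the
  -- total decrease `4 c h (T / 2)` of the telescoping sum.
  obtain ⟨k, hk1, hTk⟩ : ∃ k, 1 ≤ k ∧ (T = 2 * k ∨ T = 2 * k + 1) := ⟨T / 2, by omega, by omega⟩
  by_contra! hcon
  set E := 16 * c / (T + 4)
  have hE : 0 ≤ E := by positivity
  have hsum : ((T + 1 - k : ℕ) : ℝ) * E ^ 2 ≤ 4 * c * h k := by
    calc ((T + 1 - k : ℕ) : ℝ) * E ^ 2 = ∑ t ∈ Icc k T, E ^ 2 := by simp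
      _ ≤ ∑ t ∈ Icc k T, s t ^ 2 := by
        refine sum_le_sum fun t ht => ?_
        rw [mem_Icc] at ht
        exact pow_le_pow_left₀ hE (hcon t (by omega) ht.2).le 2
      _ ≤ ∑ t ∈ Icc k T, 4 * c * (h t - h (t + 1)) := sum_le_sum fun t _ => hs t
      _ = 4 * c * (h k - h (T + 1)) := by
        rw [← mul_sum, ← neg_sub (h (T + 1)), ← sum_Icc_sub (by omega), ← sum_neg_distrib]
        simp only [neg_sub]
      _ ≤ 4 * c * h k := by nlinarith [h_nonneg (T + 1)]
  have hk := h_le k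
  rw [Nat.cast_sub (by omega)] at hsum
  push_cast at hsum
  rw [le_div_iff₀ (by positivity)] at hk
  simp only [E, div_pow] at hsum
  rw [mul_div_assoc', div_le_iff₀ (by positivity)] at hsum
  have key : ((T : ℝ) + 1 - k) * 4 * (k + 4) ≤ (T + 4) ^ 2 := by
    have h1 := mul_le_mul_of_nonneg_right hsum (by positivity : (0 : ℝ) ≤ k + 4)
    have h2 := mul_le_mul_of_nonneg_left hk (by positivity : (0 : ℝ) ≤ 4 * c * (T + 4) ^ 2)
    refine le_of_mul_le_mul_left ?_ (mul_pos hc hc)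
    linear_combination (h1 + h2) / 64
  have hk1 : (1 : ℝ) ≤ k := by exact_mod_cast hk1
  rcases hTk with rfl | rfl <;> push_cast at key <;> nlinarith

theorem norm_sub_le_add_add_norm_sub {G : Type*} [NormedAddCommGroup G] {P Q : Set G}
    {DP DQ : ℝ} (hDP : ∀ p ∈ P, ∀ p' ∈ P, ‖p - p'‖ ≤ DP)
    (hDQ : ∀ q ∈ Q, ∀ q' ∈ Q, ‖q - q'‖ ≤ DQ) {p q p' q' : G} (hp : p ∈ P) (hq : q ∈ Q)
    (hp' : p' ∈ P) (hq' : q' ∈ Q) : ‖p - q‖ ≤ DP + DQ + ‖p' - q'‖ := by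
  have := norm_add₃_le (a := p - p') (b := p' - q') (c := q' - q)
  rw [show p - p' + (p' - q') + (q' - q) = p - q by abel] at this
  linarith [hDP p hp p' hp', hDQ q' hq' q hq]

section

variable {G : Type*} [NormedAddCommGroup G] [InnerProductSpace ℝ G]

/-- Exact line search for `θ ↦ ‖a - θ • d‖²`, clipped to `θ ≤ 1`. -/
noncomputable def shortStep (a d : G) : ℝ := min (⟪a, d⟫ / ‖d‖ ^ 2) 1

theorem shortStep_nonneg {a d : G} (h : 0 ≤ ⟪a, d⟫) : 0 ≤ shortStep a d :=
  le_min (by positivity) zero_le_one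

theorem shortStep_le_one (a d : G) : shortStep a d ≤ 1 := min_le_right _ _

theorem shortStep_mul_norm_sq_le {a d : G} (h : 0 ≤ ⟪a, d⟫) :
    shortStep a d * ‖d‖ ^ 2 ≤ ⟪a, d⟫ := by
  rcases eq_or_ne ‖d‖ 0 with hd | hd
  · simpa [hd] using h
  · calc shortStep a d * ‖d‖ ^ 2 ≤ ⟪a, d⟫ / ‖d‖ ^ 2 * ‖d‖ ^ 2 := by
          gcongr; exact min_le_left _ _
      _ = ⟪a, d⟫ := div_mul_cancel₀ _ (by positivity)

theorem norm_sq_sub_norm_sub_smul_sq (a d : G) (θ : ℝ) :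
    ‖a‖ ^ 2 - ‖a - θ • d‖ ^ 2 = 2 * θ * ⟪a, d⟫ - θ ^ 2 * ‖d‖ ^ 2 := by
  rw [norm_sub_sq_real, real_inner_smul_right, norm_smul, mul_pow, Real.norm_eq_abs, sq_abs]
  ring

theorem sq_shortStep_mul_norm_le {a d : G} (h : 0 ≤ ⟪a, d⟫) :
    (shortStep a d * ‖d‖) ^ 2 ≤ ‖a‖ ^ 2 - ‖a - shortStep a d • d‖ ^ 2 := by
  have hθ := shortStep_nonneg h
  have := mul_le_mul_of_nonneg_left (shortStep_mul_norm_sq_le h) hθ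
  rw [norm_sq_sub_norm_sub_smul_sq]
  nlinarith

theorem inner_sq_le_mul_norm_sq_sub_norm_sub_shortStep_smul_sq {a d : G} (h : 0 ≤ ⟪a, d⟫) :
    ⟪a, d⟫ ^ 2 ≤ ‖d‖ * (‖d‖ + ‖a‖) * (‖a‖ ^ 2 - ‖a - shortStep a d • d‖ ^ 2) := by
  rw [norm_sq_sub_norm_sub_smul_sq]
  have hgap : ⟪a, d⟫ ≤ ‖a‖ * ‖d‖ := real_inner_le_norm a d
  rcases eq_or_ne ‖d‖ 0 with hd | hd
  · rw [norm_eq_zero.1 hd, inner_zero_right]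
    simp
  have hd2 : 0 < ‖d‖ ^ 2 := by positivity
  rcases le_or_gt (⟪a, d⟫ / ‖d‖ ^ 2) 1 with hle | hlt
  · -- exact line search: the decrease is `⟪a, d⟫² / ‖d‖²`
    have hθ : shortStep a d = ⟪a, d⟫ / ‖d‖ ^ 2 := min_eq_left hle
    have hdec : 2 * shortStep a d * ⟪a, d⟫ - shortStep a d ^ 2 * ‖d‖ ^ 2 =
        ⟪a, d⟫ ^ 2 / ‖d‖ ^ 2 := by
      rw [hθ]; field_simp; ring
    rw [hdec]
    calc ⟪a, d⟫ ^ 2 = ‖d‖ ^ 2 * (⟪a, d⟫ ^ 2 / ‖d‖ ^ 2) := by field_simp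
      _ ≤ ‖d‖ * (‖d‖ + ‖a‖) * (⟪a, d⟫ ^ 2 / ‖d‖ ^ 2) := by
        gcongr; nlinarith [norm_nonneg a, norm_nonneg d]
  · -- full step: the decrease `2 ⟪a, d⟫ - ‖d‖²` is at least `⟪a, d⟫`
    have hθ : shortStep a d = 1 := min_eq_right hlt.le
    have hgt : ‖d‖ ^ 2 < ⟪a, d⟫ := (one_lt_div hd2).1 hlt
    rw [hθ]
    nlinarith [mul_le_mul_of_nonneg_left hgap h, norm_nonneg a, norm_nonneg d]

theorem inner_sub_le_inner_sub_of_inner_le {a u w : G} (h : ⟪a, u⟫ ≤ ⟪a, w⟫) (x : G) :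
    ⟪a, x - w⟫ ≤ ⟪a, x - u⟫ := by
  simp only [inner_sub_right]
  linarith

theorem Convex.add_shortStep_smul_sub_mem {S : Set G} (hS : Convex ℝ S) {a x u : G}
    (hx : x ∈ S) (hu : u ∈ S) (hmin : ⟪a, u⟫ ≤ ⟪a, x⟫) :
    x + shortStep a (x - u) • (u - x) ∈ S := by
  have h : 0 ≤ ⟪a, x - u⟫ := by simpa using inner_sub_le_inner_sub_of_inner_le hmin x
  exact hS.add_smul_sub_mem hx hu ⟨shortStep_nonneg h, shortStep_le_one _ _⟩

theorem norm_sq_sub_inner_le_of_alternating_step {x y u v x' p q : G} {γ DQ : ℝ} (hγ : 0 ≤ γ)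
    (hx' : x' = x + γ • (u - x)) (hp : ⟪x - y, u⟫ ≤ ⟪x - y, p⟫)
    (hq : ⟪y - x', v⟫ ≤ ⟪y - x', q⟫) (hqy : ‖q - y‖ ≤ DQ) :
    ‖x - y‖ ^ 2 - ⟪x - y, p - q⟫ ≤
      ⟪x - y, x - u⟫ + γ * ‖x - u‖ * DQ + ⟪y - x', y - v⟫ := by
  have hsplit : ‖x - y‖ ^ 2 - ⟪x - y, p - q⟫ =
      ⟪x - y, x - p⟫ + ⟪x - x', q - y⟫ + ⟪y - x', y - q⟫ := by
    rw [← real_inner_self_eq_norm_sq]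
    simp only [inner_sub_left, inner_sub_right]
    ring
  have hmove : ⟪x - x', q - y⟫ ≤ γ * ‖x - u‖ * DQ := by
    rw [show x - x' = γ • (x - u) by rw [hx']; module, real_inner_smul_left, mul_assoc]
    gcongr
    exact (real_inner_le_norm _ _).trans (by gcongr)
  linarith [inner_sub_le_inner_sub_of_inner_le hp x, inner_sub_le_inner_sub_of_inner_le hq y]

theorem alternating_step_bound {P Q : Set G} {DP DQ R : ℝ}
    (hDP : ∀ p ∈ P, ∀ p' ∈ P, ‖p - p'‖ ≤ DP) (hDQ : ∀ q ∈ Q, ∀ q' ∈ Q, ‖q - q'‖ ≤ DQ)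
    (hR : ∀ p ∈ P, ∀ q ∈ Q, ‖p - q‖ ≤ R) {x y u v x' y' : G} (hx : x ∈ P) (hy : y ∈ Q)
    (hu : u ∈ P) (hv : v ∈ Q) (hx' : x' ∈ P)
    (hu_min : ∀ w ∈ P, ⟪x - y, u⟫ ≤ ⟪x - y, w⟫) (hv_min : ∀ w ∈ Q, ⟪y - x', v⟫ ≤ ⟪y - x', w⟫)
    (hx'_eq : x' = x + shortStep (x - y) (x - u) • (u - x))
    (hy'_eq : y' = y + shortStep (y - x') (y - v) • (v - y)) :
    ∃ s, (∀ p ∈ P, ∀ q ∈ Q, ‖x - y‖ ^ 2 - ⟪x - y, p - q⟫ ≤ s) ∧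
      s ^ 2 ≤ 4 * (R * max DP DQ + 2 * (DP ^ 2 + DQ ^ 2)) * (‖x - y‖ ^ 2 - ‖x' - y'‖ ^ 2) ∧
      s ≤ 3 * (R * max DP DQ + 2 * (DP ^ 2 + DQ ^ 2)) := by
  set γ := shortStep (x - y) (x - u)
  set g₁ := ⟪x - y, x - u⟫
  set g₂ := ⟪y - x', y - v⟫
  have hg₁ : 0 ≤ g₁ := by simpa using inner_sub_le_inner_sub_of_inner_le (hu_min x hx) x
  have hg₂ : 0 ≤ g₂ := by simpa using inner_sub_le_inner_sub_of_inner_le (hv_min y hy) y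
  have hγ := shortStep_nonneg hg₁
  have hxu : ‖x - u‖ ≤ DP := hDP x hx u hu
  have hyv : ‖y - v‖ ≤ DQ := hDQ y hy v hv
  have hxy : ‖x - y‖ ≤ R := hR x hx y hy
  have hyx' : ‖y - x'‖ ≤ R := norm_sub_rev y x' ▸ hR x' hx' y hy
  have hDP0 : 0 ≤ DP := (norm_nonneg _).trans hxu
  have hDQ0 : 0 ≤ DQ := (norm_nonneg _).trans hyv
  have hR0 : 0 ≤ R := (norm_nonneg _).trans hxy
  refine ⟨g₁ + γ * ‖x - u‖ * DQ + g₂, fun p hp q hq =>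
    norm_sq_sub_inner_le_of_alternating_step hγ hx'_eq (hu_min p hp) (hv_min q hq)
      (hDQ q hq y hy), ?_, ?_⟩
  · have hx_step : x' - y = x - y - γ • (x - u) := by rw [hx'_eq]; module
    have hy_step : y' - x' = y - x' - shortStep (y - x') (y - v) • (y - v) := by
      rw [hy'_eq]; module
    set δ₁ := ‖x - y‖ ^ 2 - ‖x' - y‖ ^ 2
    set δ₂ := ‖y - x'‖ ^ 2 - ‖y' - x'‖ ^ 2
    have hmove : (γ * ‖x - u‖) ^ 2 ≤ δ₁ := by
      simp only [δ₁, hx_step]; exact sq_shortStep_mul_norm_le hg₁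
    have hδ₁ : 0 ≤ δ₁ := (sq_nonneg _).trans hmove
    have hδ₂ : 0 ≤ δ₂ := by
      simp only [δ₂, hy_step]; exact (sq_nonneg _).trans (sq_shortStep_mul_norm_le hg₂)
    have hg₁_sq : g₁ ^ 2 ≤ DP * (DP + R) * δ₁ :=
      (hx_step ▸ inner_sq_le_mul_norm_sq_sub_norm_sub_shortStep_smul_sq hg₁).trans
        (by gcongr)
    have hg₂_sq : g₂ ^ 2 ≤ DQ * (DQ + R) * δ₂ :=
      (hy_step ▸ inner_sq_le_mul_norm_sq_sub_norm_sub_shortStep_smul_sq hg₂).trans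
        (by gcongr)
    have hm_sq : (γ * ‖x - u‖ * DQ) ^ 2 ≤ DQ ^ 2 * δ₁ := by
      rw [mul_pow, mul_comm (DQ ^ 2)]; gcongr
    have hδ : δ₁ + δ₂ = ‖x - y‖ ^ 2 - ‖x' - y'‖ ^ 2 := by
      simp only [δ₁, δ₂, norm_sub_rev y x', norm_sub_rev y' x']; ring
    have hcs := add_sq_le_add_mul_add_of_sq_le_mul (by positivity) (by positivity)
      (by positivity) hδ₂
      (add_sq_le_add_mul_add_of_sq_le_mul (by positivity) (sq_nonneg DQ) hδ₁ hδ₁ hg₁_sq hm_sq)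
      hg₂_sq
    have hM : DP + DQ ≤ 2 * max DP DQ := by linarith [le_max_left DP DQ, le_max_right DP DQ]
    have hR_M := mul_le_mul_of_nonneg_left hM hR0
    rw [← hδ]
    refine hcs.trans ?_
    nlinarith [mul_nonneg hR0 (le_max_of_le_left hDP0 : 0 ≤ max DP DQ)]
  · have h₁ : g₁ ≤ R * DP :=
      (real_inner_le_norm _ _).trans (mul_le_mul hxy hxu (norm_nonneg _) hR0)
    have h₂ : g₂ ≤ R * DQ :=
      (real_inner_le_norm _ _).trans (mul_le_mul hyx' hyv (norm_nonneg _) hR0)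
    have hm : γ * ‖x - u‖ * DQ ≤ DP * DQ := by
      gcongr
      exact (mul_le_of_le_one_left (norm_nonneg _) (shortStep_le_one _ _)).trans hxu
    have hM₁ := mul_le_mul_of_nonneg_left (le_max_left DP DQ) hR0
    have hM₂ := mul_le_mul_of_nonneg_left (le_max_right DP DQ) hR0
    nlinarith [sq_nonneg (DP - DQ)]

theorem norm_sq_sub_norm_sq_le_two_mul_sub_inner (a b : G) :
    ‖a‖ ^ 2 - ‖b‖ ^ 2 ≤ 2 * (‖a‖ ^ 2 - ⟪a, b⟫) := by
  nlinarith [norm_sub_sq_real a b, sq_nonneg ‖a - b‖]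

variable {P Q : Set G} {DP DQ : ℝ}

theorem norm_sq_sub_norm_sq_le_of_mem {R : ℝ} (hDP : ∀ p ∈ P, ∀ p' ∈ P, ‖p - p'‖ ≤ DP)
    (hDQ : ∀ q ∈ Q, ∀ q' ∈ Q, ‖q - q'‖ ≤ DQ) (hR : ∀ p ∈ P, ∀ q ∈ Q, ‖p - q‖ ≤ R)
    {p q p' q' : G} (hp : p ∈ P) (hq : q ∈ Q) (hp' : p' ∈ P) (hq' : q' ∈ Q) :
    ‖p - q‖ ^ 2 - ‖p' - q'‖ ^ 2 ≤ 4 * (R * max DP DQ + 2 * (DP ^ 2 + DQ ^ 2)) := by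
  have hR0 : 0 ≤ R := (norm_nonneg _).trans (hR p hp q hq)
  have hdiff : ‖p - q - (p' - q')‖ ≤ DP + DQ := by
    rw [show p - q - (p' - q') = (p - p') - (q - q') by abel]
    exact (norm_sub_le _ _).trans (add_le_add (hDP p hp p' hp') (hDQ q hq q' hq'))
  have hgap : ‖p - q‖ ^ 2 - ⟪p - q, p' - q'⟫ ≤ R * (DP + DQ) := by
    rw [← real_inner_self_eq_norm_sq, ← inner_sub_right]
    exact (real_inner_le_norm _ _).trans (mul_le_mul (hR p hp q hq) hdiff (norm_nonneg _) hR0)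
  have hM := mul_le_mul_of_nonneg_left (add_le_add (le_max_left DP DQ) (le_max_right DP DQ)) hR0
  linarith [norm_sq_sub_norm_sq_le_two_mul_sub_inner (p - q) (p' - q'), sq_nonneg DP,
    sq_nonneg DQ]

theorem alternating_short_step_mem (hP : Convex ℝ P) (hQ : Convex ℝ Q) {x y u v : ℕ → G}
    (hx0 : x 0 ∈ P) (hy0 : y 0 ∈ Q) (hu : ∀ t, u t ∈ P)
    (hu_min : ∀ t, ∀ w ∈ P, ⟪x t - y t, u t⟫ ≤ ⟪x t - y t, w⟫)
    (hx : ∀ t, x (t + 1) = x t + shortStep (x t - y t) (x t - u t) • (u t - x t))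
    (hv : ∀ t, v t ∈ Q) (hv_min : ∀ t, ∀ w ∈ Q, ⟪y t - x (t + 1), v t⟫ ≤ ⟪y t - x (t + 1), w⟫)
    (hy : ∀ t, y (t + 1) = y t + shortStep (y t - x (t + 1)) (y t - v t) • (v t - y t))
    (t : ℕ) : x t ∈ P ∧ y t ∈ Q := by
  induction t with
  | zero => exact ⟨hx0, hy0⟩
  | succ n ih =>
    exact ⟨hx n ▸ hP.add_shortStep_smul_sub_mem ih.1 (hu n) (hu_min n _ ih.1),
      hy n ▸ hQ.add_shortStep_smul_sub_mem ih.2 (hv n) (hv_min n _ ih.2)⟩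

end

theorem alm_short_step_dual_gap_rate_general
    {G : Type*} [NormedAddCommGroup G] [InnerProductSpace ℝ G]
    (P Q : Set G)
    (hPcpt : IsCompact P) (hQcpt : IsCompact Q)
    (hPconv : Convex ℝ P) (hQconv : Convex ℝ Q)
    (DP DQ : ℝ) (hDP : Metric.diam P = DP) (hDQ : Metric.diam Q = DQ)
    (xs ys : G) (hxs : xs ∈ P) (hys : ys ∈ Q)
    (hmin : ∀ p ∈ P, ∀ q ∈ Q, ‖xs - ys‖ ≤ ‖p - q‖)
    (D c : ℝ) (hDdef : D = Real.sqrt (DP ^ 2 + DQ ^ 2))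
    (hc : c = (DP + DQ + ‖xs - ys‖) * max DP DQ + 2 * D ^ 2)
    (x y u v : ℕ → G) (hx0 : x 0 ∈ P) (hy0 : y 0 ∈ Q)
    (humem : ∀ t : ℕ, u t ∈ P)
    (humin : ∀ t : ℕ, ∀ w ∈ P, ⟪x t - y t, u t⟫ ≤ ⟪x t - y t, w⟫)
    (hxupd : ∀ t : ℕ, x (t + 1) = x t +
      (min (⟪x t - y t, x t - u t⟫ / ‖x t - u t‖ ^ 2) 1) • (u t - x t))
    (hvmem : ∀ t : ℕ, v t ∈ Q)
    (hvmin : ∀ t : ℕ, ∀ w ∈ Q, ⟪y t - x (t + 1), v t⟫ ≤ ⟪y t - x (t + 1), w⟫)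
    (hyupd : ∀ t : ℕ, y (t + 1) = y t +
      (min (⟪y t - x (t + 1), y t - v t⟫ / ‖y t - v t‖ ^ 2) 1) • (v t - y t)) :
    ∀ T : ℕ, 1 ≤ T → ∃ t : ℕ, 1 ≤ t ∧ t ≤ T ∧
      ∀ p ∈ P, ∀ q ∈ Q,
        ‖x t - y t‖ ^ 2 - ⟪x t - y t, p - q⟫ ≤ 16 * c / ((T : ℝ) + 4) := by
  intro T hT
  have hPD : ∀ p ∈ P, ∀ p' ∈ P, ‖p - p'‖ ≤ DP := fun p hp p' hp' =>
    hDP ▸ dist_eq_norm p p' ▸ dist_le_diam_of_mem hPcpt.isBounded hp hp'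
  have hQD : ∀ q ∈ Q, ∀ q' ∈ Q, ‖q - q'‖ ≤ DQ := fun q hq q' hq' =>
    hDQ ▸ dist_eq_norm q q' ▸ dist_le_diam_of_mem hQcpt.isBounded hq hq'
  have hR := fun p hp q hq => norm_sub_le_add_add_norm_sub hPD hQD (p := p) (q := q) hp hq hxs hys
  have hmem := alternating_short_step_mem hPconv hQconv hx0 hy0 humem humin hxupd hvmem hvmin hyupd
  have hc' : c = (DP + DQ + ‖xs - ys‖) * max DP DQ + 2 * (DP ^ 2 + DQ ^ 2) := by
    rw [hc, hDdef, Real.sq_sqrt (by positivity)]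
  choose s hs_gap hs_sq hs_le using fun t => alternating_step_bound hPD hQD hR (hmem t).1
    (hmem t).2 (humem t) (hvmem t) (hmem (t + 1)).1 (humin t) (hvmin t) (hxupd t) (hyupd t)
  rw [← hc'] at hs_sq hs_le
  set h : ℕ → ℝ := fun t => ‖x t - y t‖ ^ 2 - ‖xs - ys‖ ^ 2
  have h_nonneg (t : ℕ) : 0 ≤ h t := by
    simpa [h] using pow_le_pow_left₀ (norm_nonneg _) (hmin _ (hmem t).1 _ (hmem t).2) 2
  have h_zero : h 0 ≤ 16 * c / 4 := by
    linarith [hc' ▸ norm_sq_sub_norm_sq_le_of_mem hPD hQD hR hx0 hy0 hxs hys]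
  have hs_sq' (t : ℕ) : s t ^ 2 ≤ 4 * c * (h t - h (t + 1)) := by
    simpa only [h, sub_sub_sub_cancel_right] using hs_sq t
  have h_dec (t : ℕ) : h t ^ 2 ≤ 16 * c * (h t - h (t + 1)) := by
    have : h t ≤ 2 * s t := (norm_sq_sub_norm_sq_le_two_mul_sub_inner _ _).trans
      (by linarith [hs_gap t xs hxs ys hys])
    nlinarith [hs_sq' t, h_nonneg t]
  obtain ⟨t, ht₁, htT, hst⟩ := exists_le_div_of_sq_le_mul_sub h_nonneg
    (le_div_add_four_of_sq_le_mul_sub h_nonneg h_zero h_dec) hs_sq' hs_le hT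
  exact ⟨t, ht₁, htT, fun p hp q hq => (hs_gap t p hp q hq).trans hst⟩

/-- **Frank–Wolfe-gap convergence of Alternating Linear Minimizations** with the
short-step rule: with `c = (D_P + D_Q + dist(P,Q)) max{D_P, D_Q} + 2D²`,
`D = √(D_P² + D_Q²)`, one has
`min_{1 ≤ t ≤ T} max_{x ∈ P, y ∈ Q} (‖x_t − y_t‖² − ⟨x_t − y_t, x − y⟩) ≤ 16c/(T+4)`. -/
theorem alm_short_step_dual_gap_rate
    {G : Type*} [NormedAddCommGroup G] [InnerProductSpace ℝ G]
    (P Q : Set G) (hPne : P.Nonempty) (hQne : Q.Nonempty)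
    (hPcpt : IsCompact P) (hQcpt : IsCompact Q)
    (hPconv : Convex ℝ P) (hQconv : Convex ℝ Q)
    (DP DQ : ℝ) (hDP : Metric.diam P = DP) (hDQ : Metric.diam Q = DQ)
    (xs ys : G) (hxs : xs ∈ P) (hys : ys ∈ Q)
    (hmin : ∀ p ∈ P, ∀ q ∈ Q, ‖xs - ys‖ ≤ ‖p - q‖)
    (D c : ℝ) (hDdef : D = Real.sqrt (DP ^ 2 + DQ ^ 2))
    (hc : c = (DP + DQ + ‖xs - ys‖) * max DP DQ + 2 * D ^ 2)
    (x y u v : ℕ → G) (hx0 : x 0 ∈ P) (hy0 : y 0 ∈ Q)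
    (humem : ∀ t : ℕ, u t ∈ P)
    (humin : ∀ t : ℕ, ∀ w ∈ P, ⟪x t - y t, u t⟫ ≤ ⟪x t - y t, w⟫)
    (hxupd : ∀ t : ℕ, x (t + 1) = x t +
      (min (⟪x t - y t, x t - u t⟫ / ‖x t - u t‖ ^ 2) 1) • (u t - x t))
    (hvmem : ∀ t : ℕ, v t ∈ Q)
    (hvmin : ∀ t : ℕ, ∀ w ∈ Q, ⟪y t - x (t + 1), v t⟫ ≤ ⟪y t - x (t + 1), w⟫)
    (hyupd : ∀ t : ℕ, y (t + 1) = y t +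
      (min (⟪y t - x (t + 1), y t - v t⟫ / ‖y t - v t‖ ^ 2) 1) • (v t - y t)) :
    ∀ T : ℕ, 1 ≤ T → ∃ t : ℕ, 1 ≤ t ∧ t ≤ T ∧
      ∀ p ∈ P, ∀ q ∈ Q,
        ‖x t - y t‖ ^ 2 - ⟪x t - y t, p - q⟫ ≤ 16 * c / ((T : ℝ) + 4) :=
  alm_short_step_dual_gap_rate_general P Q hPcpt hQcpt hPconv hQconv DP DQ hDP hDQ xs ys hxs hys
    hmin D c hDdef hc x y u v hx0 hy0 humem humin hxupd hvmem hvmin hyupd
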